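/- Given kₙ > 0 for each n and p_g > 0, the Stackelberg game has a unique equilibrium: there is a unique price p* > 0 minimizing C(p) = A + N·p + p_g·(Σₙ kₙ)/p, and given p*, each RU has a unique optimal consumption eₙ* = kₙ/p* − 1; at this pair, no player can improve by unilateral deviation. -/

import Mathlib

/-!
The follower's utility `k log(1 + e) - p e` is maximised exactly at `1 + e = k / p`, which is
the inequality `log t < t - 1` for `t ≠ 1` applied to `t = (1 + e) p / k`. For the leader, if
`N p*² = p_g K` then `C q - C p* = N (q - p*)² / q`, so `p* = √(p_g K / N)` is the unique
minimiser on `(0, ∞)`.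
-/

open Real Set

theorem forall_le_and_eq_of_forall_ne_lt_min {α β : Type*} [Preorder β] {f : α → β}
    {s : Set α} {a : α} (ha : a ∈ s) (h : ∀ x ∈ s, x ≠ a → f a < f x) :
    (∀ x ∈ s, f a ≤ f x) ∧ ∀ b ∈ s, (∀ x ∈ s, f b ≤ f x) → b = a := by
  refine ⟨fun x hx => ?_, fun b hb hmin => ?_⟩
  · rcases eq_or_ne x a with rfl | hne
    · exact le_rfl
    · exact (h x hx hne).le
  · by_contra hne
    exact (h b hb hne).not_ge (hmin a ha)

theorem forall_le_and_eq_of_forall_ne_lt_max {α β : Type*} [Preorder β] {f : α → β}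
    {s : Set α} {a : α} (ha : a ∈ s) (h : ∀ x ∈ s, x ≠ a → f x < f a) :
    (∀ x ∈ s, f x ≤ f a) ∧ ∀ b ∈ s, (∀ x ∈ s, f x ≤ f b) → b = a :=
  forall_le_and_eq_of_forall_ne_lt_min (β := βᵒᵈ) ha h

theorem mul_log_sub_mul_lt_of_ne {k p x : ℝ} (hk : 0 < k) (hp : 0 < p) (hx : 0 < x)
    (hne : x ≠ k / p) : k * log x - p * x < k * log (k / p) - p * (k / p) := by
  have hkp : 0 < k / p := div_pos hk hp
  have hlog : log (x / (k / p)) < x / (k / p) - 1 :=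
    log_lt_sub_one_of_pos (div_pos hx hkp) (fun h => hne ((div_eq_one_iff_eq hkp.ne').mp h))
  rw [log_div hx.ne' hkp.ne'] at hlog
  have hscaled := mul_lt_mul_of_pos_left hlog hk
  have hk_div : k * (x / (k / p) - 1) = p * x - p * (k / p) := by
    field_simp
  linarith

theorem follower_utility_lt_of_ne {k p E e : ℝ} (hk : 0 < k) (hp : 0 < p) (he : -1 < e)
    (hne : e ≠ k / p - 1) :
    k * log (1 + e) + p * (E - e) < k * log (1 + (k / p - 1)) + p * (E - (k / p - 1)) := by
  have hlt := mul_log_sub_mul_lt_of_ne hk hp (by linarith : 0 < 1 + e)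
    (fun h => hne (by linarith))
  rw [add_sub_cancel]
  linarith

theorem exists_pos_mul_sq_eq {b c : ℝ} (hb : 0 < b) (hc : 0 < c) : ∃ p, 0 < p ∧ b * p ^ 2 = c :=
  ⟨√(c / b), sqrt_pos.mpr (div_pos hc hb), by
    rw [sq_sqrt (div_pos hc hb).le]
    field_simp⟩

theorem mul_add_div_sub_mul_add_div {b c p q : ℝ} (hq : q ≠ 0)
    (hpc : b * p ^ 2 = c) : b * q + c / q - (b * p + c / p) = b * (q - p) ^ 2 / q := by
  subst hpc
  field_simp
  ring

theorem mul_add_div_lt_of_ne {b c p q : ℝ} (hb : 0 < b) (hq : 0 < q)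
    (hpc : b * p ^ 2 = c) (hne : q ≠ p) : b * p + c / p < b * q + c / q := by
  have hgap : 0 < b * (q - p) ^ 2 / q := by
    have : (q - p) ^ 2 ≠ 0 := pow_ne_zero 2 (sub_ne_zero.mpr hne)
    positivity
  rw [← mul_add_div_sub_mul_add_div hq.ne' hpc] at hgap
  linarith

/-- Unique Stackelberg equilibrium: there is a unique price `p* > 0` minimizing
`C(p) = A + N·p + p_g·K/p`, and given `p*` each RU has a unique optimal
consumption `eₙ* = kₙ/p* − 1`; at this pair no player can improve by a
unilateral deviation. -/
theorem stackelberg_equilibrium_exists_unique (N : ℕ) (hN : 1 ≤ N)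
    (E k : Fin N → ℝ) (A pg : ℝ) (hk : ∀ n, 0 < k n) (hpg : 0 < pg) :
    letI K : ℝ := ∑ n, k n
    letI C : ℝ → ℝ := fun p => A + N * p + pg * K / p
    letI U : Fin N → ℝ → ℝ → ℝ :=
      fun n e p => k n * Real.log (1 + e) + p * (E n - e)
    (∃! p : ℝ, p ∈ Set.Ioi (0 : ℝ) ∧ ∀ q ∈ Set.Ioi (0 : ℝ), C p ≤ C q) ∧
    (∀ p ∈ Set.Ioi (0 : ℝ), (∀ q ∈ Set.Ioi (0 : ℝ), C p ≤ C q) →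
      ∀ n, (k n / p - 1 ∈ Set.Ioi (-1 : ℝ) ∧
              ∀ e ∈ Set.Ioi (-1 : ℝ), U n e p ≤ U n (k n / p - 1) p) ∧
           ∀ e ∈ Set.Ioi (-1 : ℝ),
             (∀ e' ∈ Set.Ioi (-1 : ℝ), U n e' p ≤ U n e p) → e = k n / p - 1) := by
  set K := ∑ n, k n
  have hN_pos : (0 : ℝ) < N := by exact_mod_cast hN
  have hK : 0 < K := Finset.sum_pos (fun n _ => hk n) (Finset.univ_nonempty_iff.mpr ⟨⟨0, hN⟩⟩)
  obtain ⟨p₀, hp₀, hp₀_sq⟩ := exists_pos_mul_sq_eq hN_pos (mul_pos hpg hK)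
  have hC_lt : ∀ q ∈ Ioi (0 : ℝ), q ≠ p₀ →
      A + N * p₀ + pg * K / p₀ < A + N * q + pg * K / q := fun q hq hne => by
    have := mul_add_div_lt_of_ne hN_pos hq hp₀_sq hne
    linarith
  refine ⟨?_, fun p hp _ n => ?_⟩
  · obtain ⟨hmin, huniq⟩ := forall_le_and_eq_of_forall_ne_lt_min
      (f := fun q => A + N * q + pg * K / q) (mem_Ioi.mpr hp₀) hC_lt
    exact ⟨p₀, ⟨hp₀, hmin⟩, fun p hp => huniq p hp.1 hp.2⟩
  · have hopt : k n / p - 1 ∈ Ioi (-1 : ℝ) := by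
      have := div_pos (hk n) hp
      rw [mem_Ioi]
      linarith
    obtain ⟨hmax, huniq⟩ := forall_le_and_eq_of_forall_ne_lt_max
      (f := fun e => k n * log (1 + e) + p * (E n - e)) hopt fun e he hne =>
        follower_utility_lt_of_ne (hk n) hp he hne
    exact ⟨⟨hopt, hmax⟩, huniq⟩
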